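/- arXiv:1503.06895 — 2 statements merged into one kernel-verified Lean document; each statement's English description precedes it below -/
import Mathlib

section
/- The map g is not Li-Yorke chaotic. -/
/-!
`g` multiplies moduli by `e` and only rotates each circle `‖z‖ = r` rigidly. Hence for `x ≠ y`
the distance `‖gⁿ x - gⁿ y‖` is at least `eⁿ ‖x - y‖` when `‖x‖ = ‖y‖`, and at least
`eⁿ |‖x‖ - ‖y‖|` otherwise. Distinct orbits thus stay a positive distance apart, so the liminf
of their distances never vanishes and `g` has no Li-Yorke pair at all.
-/

/-- `{x, y}` is a Li-Yorke chaotic pair for `T` if the distances between the iterates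
`Tⁿ x` and `Tⁿ y` have positive limsup and zero liminf. -/
def LiYorkePair {X : Type*} [PseudoEMetricSpace X] (T : X → X) (x y : X) : Prop :=
  0 < Filter.limsup (fun n : ℕ => edist (T^[n] x) (T^[n] y)) Filter.atTop ∧
    Filter.liminf (fun n : ℕ => edist (T^[n] x) (T^[n] y)) Filter.atTop = 0

/-- `T` is Li-Yorke chaotic if there is an uncountable set all of whose pairs of distinct
points are Li-Yorke chaotic pairs for `T`. -/
def LiYorkeChaotic {X : Type*} [PseudoEMetricSpace X] (T : X → X) : Prop :=
  ∃ Γ : Set X, ¬ Γ.Countable ∧ ∀ x ∈ Γ, ∀ y ∈ Γ, x ≠ y → LiYorkePair T x y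

/-- The map `g` on `ℂ`. -/
noncomputable def mapG (z : ℂ) : ℂ :=
  if z = 0 then 0 else
    Real.exp 1 * z * Complex.exp (2 * Real.pi * Complex.I * Real.log ‖z‖)

/-- The map `G`, the inverse of `g`, on `ℂ`. -/
noncomputable def mapGinv (w : ℂ) : ℂ :=
  if w = 0 then 0 else
    (Real.exp 1)⁻¹ * w * Complex.exp (-(2 * Real.pi * Complex.I * Real.log ‖w‖))

open Filter

section LiYorke

variable {X : Type*} [PseudoEMetricSpace X] {T : X → X}

theorem not_liYorkePair_of_le_edist {x y : X} {c : ENNReal} (hc : 0 < c)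
    (h : ∀ n, c ≤ edist (T^[n] x) (T^[n] y)) : ¬ LiYorkePair T x y := by
  rintro ⟨-, hliminf⟩
  have : c ≤ liminf (fun n ↦ edist (T^[n] x) (T^[n] y)) atTop :=
    le_liminf_of_le (by isBoundedDefault) (Eventually.of_forall h)
  exact hc.ne' (le_antisymm (hliminf ▸ this) bot_le)

theorem not_liYorkeChaotic_of_forall_ne (h : ∀ x y, x ≠ y → ¬ LiYorkePair T x y) :
    ¬ LiYorkeChaotic T := by
  rintro ⟨Γ, hΓ, hpair⟩
  refine hΓ (Set.Subsingleton.countable fun x hx y hy ↦ ?_)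
  by_contra hxy
  exact h x y hxy (hpair x hx y hy hxy)

end LiYorke

theorem norm_exp_two_pi_I_mul (r : ℝ) : ‖Complex.exp (2 * Real.pi * Complex.I * r)‖ = 1 := by
  rw [Complex.norm_exp]
  simp [Complex.mul_re]

theorem norm_mapG (z : ℂ) : ‖mapG z‖ = Real.exp 1 * ‖z‖ := by
  by_cases hz : z = 0
  · simp [hz, mapG]
  · rw [mapG, if_neg hz, norm_mul, norm_mul, norm_exp_two_pi_I_mul, Complex.norm_real,
      Real.norm_of_nonneg (Real.exp_pos 1).le, mul_one]

theorem norm_iterate_mapG (n : ℕ) (z : ℂ) : ‖mapG^[n] z‖ = Real.exp 1 ^ n * ‖z‖ := by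
  induction n with
  | zero => simp
  | succ n ih => rw [Function.iterate_succ_apply', norm_mapG, ih, pow_succ]; ring

theorem norm_mapG_sub_mapG_of_norm_eq {a b : ℂ} (h : ‖a‖ = ‖b‖) :
    ‖mapG a - mapG b‖ = Real.exp 1 * ‖a - b‖ := by
  by_cases ha : a = 0
  · have hb : b = 0 := by rwa [ha, norm_zero, eq_comm, norm_eq_zero] at h
    simp [ha, hb, mapG]
  have hb : b ≠ 0 := by rwa [ne_eq, ← norm_eq_zero, ← h, norm_eq_zero]
  have hsub : mapG a - mapG b =
      Real.exp 1 * Complex.exp (2 * Real.pi * Complex.I * Real.log ‖a‖) * (a - b) := by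
    rw [mapG, mapG, if_neg ha, if_neg hb, ← h]
    ring
  rw [hsub, norm_mul, norm_mul, norm_exp_two_pi_I_mul, Complex.norm_real,
    Real.norm_of_nonneg (Real.exp_pos 1).le, mul_one]

theorem norm_iterate_sub_of_norm_eq {x y : ℂ} (h : ‖x‖ = ‖y‖) (n : ℕ) :
    ‖mapG^[n] x - mapG^[n] y‖ = Real.exp 1 ^ n * ‖x - y‖ := by
  induction n with
  | zero => simp
  | succ n ih =>
    have hnorm : ‖mapG^[n] x‖ = ‖mapG^[n] y‖ := by rw [norm_iterate_mapG, norm_iterate_mapG, h]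
    rw [Function.iterate_succ_apply', Function.iterate_succ_apply',
      norm_mapG_sub_mapG_of_norm_eq hnorm, ih, pow_succ]
    ring

theorem exists_pos_le_norm_iterate_mapG_sub {x y : ℂ} (hxy : x ≠ y) :
    ∃ c : ℝ, 0 < c ∧ ∀ n, c ≤ ‖mapG^[n] x - mapG^[n] y‖ := by
  have one_le_exp_pow (n : ℕ) : 1 ≤ Real.exp 1 ^ n :=
    one_le_pow₀ (Real.one_le_exp zero_le_one)
  by_cases h : ‖x‖ = ‖y‖
  · refine ⟨‖x - y‖, norm_pos_iff.mpr (sub_ne_zero.mpr hxy), fun n ↦ ?_⟩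
    rw [norm_iterate_sub_of_norm_eq h n]
    exact le_mul_of_one_le_left (norm_nonneg _) (one_le_exp_pow n)
  · refine ⟨|‖x‖ - ‖y‖|, abs_pos.mpr (sub_ne_zero.mpr h), fun n ↦ ?_⟩
    calc |‖x‖ - ‖y‖|
        ≤ Real.exp 1 ^ n * |‖x‖ - ‖y‖| := le_mul_of_one_le_left (abs_nonneg _) (one_le_exp_pow n)
      _ = |‖mapG^[n] x‖ - ‖mapG^[n] y‖| := by
        rw [norm_iterate_mapG, norm_iterate_mapG, ← mul_sub, abs_mul,
          abs_of_pos (pow_pos (Real.exp_pos 1) n)]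
      _ ≤ ‖mapG^[n] x - mapG^[n] y‖ := abs_norm_sub_norm_le _ _

theorem not_liYorkePair_mapG {x y : ℂ} (hxy : x ≠ y) : ¬ LiYorkePair mapG x y := by
  obtain ⟨c, hc, hle⟩ := exists_pos_le_norm_iterate_mapG_sub hxy
  refine not_liYorkePair_of_le_edist (ENNReal.ofReal_pos.mpr hc) fun n ↦ ?_
  rw [edist_dist, dist_eq_norm]
  exact ENNReal.ofReal_le_ofReal (hle n)

/-- The map `g` is not Li-Yorke chaotic. -/
theorem stmt_10 : ¬ LiYorkeChaotic mapG :=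
  not_liYorkeChaotic_of_forall_ne fun _ _ ↦ not_liYorkePair_mapG
end

section
/- The map G is not Li-Yorke chaotic. -/
/-! The rotation factor in `G` has modulus one, so `G` shrinks every norm by the factor `e⁻¹`.
Hence every orbit converges to `0`, the distance between any two orbits tends to `0`, and no pair
of points has a positive limsup of distances. -/

open Filter Topology

lemma LiYorkePair.not_of_tendsto {X : Type*} [PseudoEMetricSpace X] {T : X → X} {x y a : X}
    (hx : Tendsto (fun n ↦ T^[n] x) atTop (𝓝 a)) (hy : Tendsto (fun n ↦ T^[n] y) atTop (𝓝 a)) :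
    ¬ LiYorkePair T x y := by
  rintro ⟨hpos, -⟩
  have hdist : Tendsto (fun n ↦ edist (T^[n] x) (T^[n] y)) atTop (𝓝 0) := by
    simpa using hx.edist hy
  exact hpos.ne' hdist.limsup_eq

lemma LiYorkeChaotic.not_of_forall_tendsto {X : Type*} [PseudoEMetricSpace X] {T : X → X}
    {a : X} (h : ∀ x, Tendsto (fun n ↦ T^[n] x) atTop (𝓝 a)) : ¬ LiYorkeChaotic T := by
  rintro ⟨Γ, hΓ, hpair⟩
  obtain ⟨x, hx, y, hy, hxy⟩ : Γ.Nontrivial :=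
    Set.not_subsingleton_iff.mp fun hs ↦ hΓ hs.countable
  exact LiYorkePair.not_of_tendsto (h x) (h y) (hpair x hx y hy hxy)

lemma norm_mapGinv (w : ℂ) : ‖mapGinv w‖ = (Real.exp 1)⁻¹ * ‖w‖ := by
  unfold mapGinv
  split_ifs with hw
  · simp [hw]
  · have hrot : ‖Complex.exp (-(2 * Real.pi * Complex.I * Real.log ‖w‖))‖ = 1 := by
      rw [Complex.norm_exp]
      simp [Complex.mul_re, Complex.mul_im]
    rw [norm_mul, norm_mul, hrot, mul_one, Complex.norm_real, Real.norm_eq_abs,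
      abs_of_pos (inv_pos.mpr (Real.exp_pos 1))]

lemma norm_iterate_mapGinv (w : ℂ) (n : ℕ) :
    ‖mapGinv^[n] w‖ = (Real.exp 1)⁻¹ ^ n * ‖w‖ := by
  induction n with
  | zero => simp
  | succ n ih =>
    rw [Function.iterate_succ_apply', norm_mapGinv, ih]
    ring

lemma tendsto_iterate_mapGinv (w : ℂ) :
    Tendsto (fun n ↦ mapGinv^[n] w) atTop (𝓝 0) := by
  have hc : (Real.exp 1)⁻¹ < 1 := inv_lt_one_of_one_lt₀ (Real.one_lt_exp_iff.mpr one_pos)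
  rw [tendsto_zero_iff_norm_tendsto_zero]
  simp only [norm_iterate_mapGinv]
  simpa using (tendsto_pow_atTop_nhds_zero_of_lt_one (by positivity) hc).mul_const ‖w‖

/-- The map `G` is not Li-Yorke chaotic. -/
theorem stmt_12 : ¬ LiYorkeChaotic mapGinv :=
  LiYorkeChaotic.not_of_forall_tendsto tendsto_iterate_mapGinv
end
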